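/- arXiv:2505.06581 — 6 statements merged into one kernel-verified Lean document; each statement's English description precedes it below -/
import Mathlib

section
/- Let H be a set of functions X → Bool such that the constant-false function belongs to H and no 2-element subset of X is shattered by H (VC dimension at most 1). Then for every c ∈ H: (1) any two elements of I(c) = {x : c x = true} are comparable under ⪯_H; and (2) if x ∈ I(c) is a greatest element of I(c) (i.e., x' ⪯_H x for all x' ∈ I(c)), then there is no x̂ ∈ X with x ⪯_H x̂ and ¬(x̂ ⪯_H x). -/
/-- `A` is shattered by the concept class `H`. -/
def Shatters {X : Type*} (H : Set (X → Bool)) (A : Finset X) : Prop :=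
  ∀ B ⊆ A, ∃ c ∈ H, (∀ x ∈ B, c x = true) ∧ (∀ x ∈ A, x ∉ B → c x = false)

/-- The partial order induced by a concept class `H`. -/
def Prec {X : Type*} (H : Set (X → Bool)) (x₁ x₂ : X) : Prop :=
  ∀ c ∈ H, c x₁ = true → c x₂ = true

/-- For a VC-dimension-1 class containing the constant-false function:
(1) any two points of `I(c)` are comparable under `⪯_H`; (2) a greatest element
of `I(c)` has no point strictly above it. -/
theorem Ic_chain_and_top_maximal {X : Type*} (H : Set (X → Bool))
    (hfalse : (fun _ => false) ∈ H)
    (hVC : ∀ A : Finset X, A.card = 2 → ¬ Shatters H A) :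
    ∀ c ∈ H,
      (∀ x₁ x₂ : X, c x₁ = true → c x₂ = true → Prec H x₁ x₂ ∨ Prec H x₂ x₁) ∧
      (∀ x : X, c x = true → (∀ x' : X, c x' = true → Prec H x' x) →
        ¬ ∃ xhat : X, Prec H x xhat ∧ ¬ Prec H xhat x) := by
  classical
  intro c hc
  constructor
  · intro x₁ x₂ h1 h2
    by_contra hcon
    push_neg at hcon
    obtain ⟨hn1, hn2⟩ := hcon
    simp only [Prec, not_forall] at hn1 hn2
    obtain ⟨c₁, hc₁, hc₁x₁, hc₁x₂⟩ := hn1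
    obtain ⟨c₂, hc₂, hc₂x₂, hc₂x₁⟩ := hn2
    have hne : x₁ ≠ x₂ := by
      rintro rfl; exact hc₁x₂ hc₁x₁
    have hcard : ({x₁, x₂} : Finset X).card = 2 := by
      rw [Finset.card_insert_of_notMem (by simpa using hne), Finset.card_singleton]
    apply hVC {x₁, x₂} hcard
    intro B hB
    by_cases hb1 : x₁ ∈ B <;> by_cases hb2 : x₂ ∈ B
    · refine ⟨c, hc, ?_, ?_⟩
      · intro x hx
        have := hB hx
        simp only [Finset.mem_insert, Finset.mem_singleton] at this
        rcases this with rfl | rfl <;> assumption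
      · intro x hxm hx
        simp only [Finset.mem_insert, Finset.mem_singleton] at hxm
        rcases hxm with rfl | rfl
        · exact absurd hb1 hx
        · exact absurd hb2 hx
    · refine ⟨c₁, hc₁, ?_, ?_⟩
      · intro x hx
        have := hB hx
        simp only [Finset.mem_insert, Finset.mem_singleton] at this
        rcases this with rfl | rfl
        · exact hc₁x₁
        · exact absurd hx hb2
      · intro x hx hxB
        simp only [Finset.mem_insert, Finset.mem_singleton] at hx
        rcases hx with rfl | rfl
        · exact absurd hb1 hxB
        · exact Bool.eq_false_iff.mpr hc₁x₂
    · refine ⟨c₂, hc₂, ?_, ?_⟩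
      · intro x hx
        have := hB hx
        simp only [Finset.mem_insert, Finset.mem_singleton] at this
        rcases this with rfl | rfl
        · exact absurd hx hb1
        · exact hc₂x₂
      · intro x hx hxB
        simp only [Finset.mem_insert, Finset.mem_singleton] at hx
        rcases hx with rfl | rfl
        · exact Bool.eq_false_iff.mpr hc₂x₁
        · exact absurd hb2 hxB
    · exact ⟨fun _ => false, hfalse, fun x hx => absurd (hB hx) (by
        simp only [Finset.mem_insert, Finset.mem_singleton]
        rintro (rfl | rfl) <;> [exact hb1 hx; exact hb2 hx]), fun _ _ _ => rfl⟩
  · rintro x hx hgreat ⟨xhat, hup, hnot⟩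
    exact hnot (hgreat xhat (hup c hc hx))
end

section
/- Let H be a set of functions X → Bool such that the constant-false function belongs to H and no 2-element subset of X is shattered by H (VC dimension at most 1). Let x ∈ X be such that there exists c ∈ H with c x = true. Then any two elements of the up-set {x' : x ⪯_H x'} are comparable under ⪯_H; that is, the set of points above x forms a chain (the path from x to the root of the tree structure). -/
/-- For a VC-dimension-1 class containing the constant-false function, the up-set
of a point `x` (with `c x = true` for some `c ∈ H`) is a chain under `⪯_H`. -/
theorem upSet_isChain {X : Type*} (H : Set (X → Bool))
    (hfalse : (fun _ => false) ∈ H)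
    (hVC : ∀ A : Finset X, A.card = 2 → ¬ Shatters H A)
    (x : X) (hx : ∃ c ∈ H, c x = true) :
    ∀ x₁ x₂ : X, Prec H x x₁ → Prec H x x₂ →
      Prec H x₁ x₂ ∨ Prec H x₂ x₁ := by
  classical
  intro x₁ x₂ h1 h2
  by_contra hcon
  push_neg at hcon
  obtain ⟨hn1, hn2⟩ := hcon
  simp only [Prec, not_forall] at hn1 hn2
  obtain ⟨c₁, hc₁H, hc₁x₁, hc₁x₂⟩ := hn1
  obtain ⟨c₂, hc₂H, hc₂x₂, hc₂x₁⟩ := hn2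
  rw [Bool.not_eq_true] at hc₁x₂ hc₂x₁
  obtain ⟨c, hcH, hcx⟩ := hx
  have hcx₁ : c x₁ = true := h1 c hcH hcx
  have hcx₂ : c x₂ = true := h2 c hcH hcx
  have hne : x₁ ≠ x₂ := by
    intro h; rw [h] at hc₁x₁; rw [hc₁x₁] at hc₁x₂; exact Bool.noConfusion hc₁x₂
  apply hVC {x₁, x₂} (by simp [hne])
  intro B hB
  by_cases h₁ : x₁ ∈ B <;> by_cases h₂ : x₂ ∈ B
  · exact ⟨c, hcH, fun y hy => by
      rcases Finset.mem_insert.mp (hB hy) with h | h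
      · subst h; exact hcx₁
      · rw [Finset.mem_singleton] at h; subst h; exact hcx₂,
      fun y hyA hyB => by
        rcases Finset.mem_insert.mp hyA with h | h
        · subst h; exact absurd h₁ hyB
        · rw [Finset.mem_singleton] at h; subst h; exact absurd h₂ hyB⟩
  · exact ⟨c₁, hc₁H, fun y hy => by
      rcases Finset.mem_insert.mp (hB hy) with h | h
      · subst h; exact hc₁x₁
      · rw [Finset.mem_singleton] at h; subst h; exact absurd hy h₂,
      fun y hyA hyB => by
        rcases Finset.mem_insert.mp hyA with h | h
        · subst h; exact absurd h₁ hyB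
        · rw [Finset.mem_singleton] at h; subst h; exact hc₁x₂⟩
  · exact ⟨c₂, hc₂H, fun y hy => by
      rcases Finset.mem_insert.mp (hB hy) with h | h
      · subst h; exact absurd hy h₁
      · rw [Finset.mem_singleton] at h; subst h; exact hc₂x₂,
      fun y hyA hyB => by
        rcases Finset.mem_insert.mp hyA with h | h
        · subst h; exact hc₂x₁
        · rw [Finset.mem_singleton] at h; subst h; exact absurd h₂ hyB⟩
  · exact ⟨fun _ => false, hfalse, fun y hy => by
      rcases Finset.mem_insert.mp (hB hy) with h | h
      · subst h; exact absurd hy h₁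
      · rw [Finset.mem_singleton] at h; subst h; exact absurd hy h₂,
      fun _ _ _ => rfl⟩
end

section
/- Let H be a set of functions X → Bool and let x₀, x₁, …, x_k ∈ X satisfy: x_i ⪯_H x_{i+1} for all 0 ≤ i < k; for each 0 ≤ i < k there exists c ∈ H with c x_i ≠ c x_{i+1}; and there exists c₀ ∈ H with c₀ x₀ = true. Then there exist concepts d₀, d₁, …, d_k ∈ H such that for all 0 ≤ i, j ≤ k, d_i x_j = true if and only if j ≥ i; in other words, ((x₀,…,x_k),(d₀,…,d_k)) is a thresholds class of length k+1 in H. -/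
/-- Given an ascending chain `x₀ ⪯_H x₁ ⪯_H ⋯ ⪯_H x_k` where consecutive points are
separated by some concept and some concept labels `x₀` with `true`, there exist
concepts `d₀, …, d_k ∈ H` forming a thresholds class with the `x_i`'s:
`d i (x j) = true ↔ i ≤ j`. -/
theorem thresholds_of_chain {X : Type*} (H : Set (X → Bool)) (k : ℕ)
    (x : Fin (k + 1) → X)
    (hchain : ∀ i : Fin k, Prec H (x i.castSucc) (x i.succ))
    (hsep : ∀ i : Fin k, ∃ c ∈ H, c (x i.castSucc) ≠ c (x i.succ))
    (hbase : ∃ c₀ ∈ H, c₀ (x 0) = true) :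
    ∃ d : Fin (k + 1) → X → Bool,
      (∀ i, d i ∈ H) ∧ ∀ i j : Fin (k + 1), d i (x j) = true ↔ i ≤ j := by
  have mono : ∀ c ∈ H, ∀ i j : Fin (k+1), i ≤ j → c (x i) = true → c (x j) = true := by
    intro c hc ⟨i, hi⟩ ⟨j, hj⟩ hij h
    simp only [Fin.le_def] at hij
    induction j with
    | zero =>
      have : i = 0 := Nat.le_zero.mp hij
      subst this; exact h
    | succ n ih =>
      rcases Nat.lt_or_ge i (n+1) with h' | h'
      · have hn : n < k + 1 := Nat.lt_of_succ_lt hj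
        have h1 : c (x ⟨n, hn⟩) = true := ih hn (Nat.lt_succ_iff.mp h')
        have hnk : n < k := Nat.lt_of_succ_lt_succ hj
        have h2 := hchain ⟨n, hnk⟩ c hc
        have e1 : (⟨n, hnk⟩ : Fin k).castSucc = ⟨n, hn⟩ := rfl
        have e2 : (⟨n, hnk⟩ : Fin k).succ = ⟨n+1, hj⟩ := rfl
        rw [e1, e2] at h2
        exact h2 h1
      · have : i = n + 1 := le_antisymm hij h'
        subst this; exact h
  obtain ⟨c₀, hc₀, hc₀t⟩ := hbase
  have sep' : ∀ m : Fin k, ∃ c, c ∈ H ∧ c (x m.castSucc) = false ∧ c (x m.succ) = true := by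
    intro m
    obtain ⟨c, hc, hne⟩ := hsep m
    refine ⟨c, hc, ?_⟩
    have himp := hchain m c hc
    cases h1 : c (x m.castSucc) <;> cases h2 : c (x m.succ)
    · exact absurd (h1.trans h2.symm) hne
    · exact ⟨rfl, rfl⟩
    · exact absurd ((himp h1).symm.trans h2) (by simp)
    · exact absurd (h1.trans h2.symm) hne
  choose c hcH hcf hct using sep'
  refine ⟨fun i => Fin.cases c₀ c i, ?_, ?_⟩
  · intro i
    induction i using Fin.cases with
    | zero => exact hc₀
    | succ m => exact hcH m
  · intro i j
    induction i using Fin.cases with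
    | zero =>
      simp only [Fin.cases_zero]
      constructor
      · intro _; exact Fin.zero_le j
      · intro _; exact mono c₀ hc₀ 0 j (Fin.zero_le j) hc₀t
    | succ m =>
      simp only [Fin.cases_succ]
      constructor
      · intro ht
        by_contra hle
        have hj : j ≤ m.castSucc := by
          simp only [Fin.le_def, Fin.coe_castSucc, Fin.val_succ] at *
          omega
        have := mono (c m) (hcH m) j m.castSucc hj ht
        rw [hcf m] at this
        exact Bool.false_ne_true this
      · intro hle
        exact mono (c m) (hcH m) m.succ j hle (hct m)
end

section
/- Let H be a set of functions X → Bool that separates points, and let x₀, x₁, …, x_k ∈ X be pairwise distinct with x_i ⪯_H x_{i+1} for all 0 ≤ i < k, and suppose there exists c₀ ∈ H with c₀ x₀ = true. Then the thresholds dimension of H is at least k+1; that is, there exist points y₁,…,y_{k+1} ∈ X and concepts d₁,…,d_{k+1} ∈ H with d_i(y_j) = true if and only if j ≥ i. (Consequently, the maximum distance of a point in the tree structure of H is at most the thresholds dimension of H.) -/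
/-- `H` separates points. -/
def SeparatesPts {X : Type*} (H : Set (X → Bool)) : Prop :=
  ∀ x₁ x₂ : X, x₁ ≠ x₂ → ∃ c ∈ H, c x₁ ≠ c x₂

/-
Each concept `c ∈ H` is monotone along the chain, so on the chain it is a threshold: false up to
some index and true from there on. A concept true at `x₀` is the threshold at `0`; a concept
separating `x_m` from `x_{m+1}` must be false at `x_m` and true at `x_{m+1}`, hence is the
threshold at `m + 1`. The chain points with these concepts form the thresholds class.
-/

lemma Fin.castSucc_covBy_succ {n : ℕ} (m : Fin n) : m.castSucc ⋖ m.succ :=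
  Fin.covBy_iff.2 <| Nat.covBy_iff_add_one_eq.2 rfl

lemma Monotone.eq_true_iff_le_of_covBy {α : Type*} [LinearOrder α] {f : α → Bool}
    (hf : Monotone f) {a b : α} (hab : a ⋖ b) (ha : f a = false) (hb : f b = true) (j : α) :
    f j = true ↔ b ≤ j := by
  refine ⟨fun hj => ?_, fun hbj => Bool.le_iff_imp.1 (hf hbj) hb⟩
  by_contra hjb
  have hja : j ≤ a := hab.le_of_lt (not_le.1 hjb)
  exact absurd (hf hja) (by simp [ha, hj])

section Chain

variable {X : Type*} {H : Set (X → Bool)} {n : ℕ} {x : Fin (n + 1) → X}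

lemma monotone_comp_of_prec_succ (hchain : ∀ i : Fin n, Prec H (x i.castSucc) (x i.succ))
    {c : X → Bool} (hc : c ∈ H) : Monotone (c ∘ x) :=
  Fin.monotone_iff_le_succ.2 fun i => Bool.le_iff_imp.2 (hchain i c hc)

lemma exists_threshold_of_prec_succ (hsep : SeparatesPts H) (hinj : Function.Injective x)
    (hchain : ∀ i : Fin n, Prec H (x i.castSucc) (x i.succ))
    (hbase : ∃ c₀ ∈ H, c₀ (x 0) = true) (i : Fin (n + 1)) :
    ∃ c ∈ H, ∀ j, c (x j) = true ↔ i ≤ j := by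
  induction i using Fin.cases with
  | zero =>
    obtain ⟨c₀, hc₀, hx₀⟩ := hbase
    exact ⟨c₀, hc₀, fun j =>
      ⟨fun _ => Fin.zero_le j,
        fun h0j => Bool.le_iff_imp.1 (monotone_comp_of_prec_succ hchain hc₀ h0j) hx₀⟩⟩
  | succ m =>
    obtain ⟨c, hc, hne⟩ := hsep _ _ (hinj.ne (Fin.castSucc_lt_succ (i := m)).ne)
    have hmono := monotone_comp_of_prec_succ hchain hc
    have hlt : c (x m.castSucc) < c (x m.succ) :=
      (hmono (Fin.castSucc_lt_succ (i := m)).le).lt_of_ne hne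
    have hfalse : c (x m.castSucc) = false := by simpa using hlt.ne_top
    have htrue : c (x m.succ) = true := by simpa using hlt.ne_bot
    exact ⟨c, hc, hmono.eq_true_iff_le_of_covBy (Fin.castSucc_covBy_succ m) hfalse htrue⟩

end Chain

/-- If `H` separates points and `x₀ ⪯_H x₁ ⪯_H ⋯ ⪯_H x_k` are pairwise distinct with
some concept labeling `x₀` true, then the thresholds dimension of `H` is at least
`k + 1`: there is a thresholds class of length `k + 1`. -/
theorem thresholdsDim_ge_of_chain {X : Type*} (H : Set (X → Bool))
    (hsep : SeparatesPts H) (k : ℕ) (x : Fin (k + 1) → X)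
    (hinj : Function.Injective x)
    (hchain : ∀ i : Fin k, Prec H (x i.castSucc) (x i.succ))
    (hbase : ∃ c₀ ∈ H, c₀ (x 0) = true) :
    ∃ (y : Fin (k + 1) → X) (d : Fin (k + 1) → X → Bool),
      (∀ i, d i ∈ H) ∧ ∀ i j : Fin (k + 1), d i (y j) = true ↔ i ≤ j := by
  choose d hdH hd using exists_threshold_of_prec_succ hsep hinj hchain hbase
  exact ⟨x, d, hdH, hd⟩
end

section
/- Let H be a set of functions X → Bool such that the constant-false function belongs to H and no 2-element subset of X is shattered by H (VC dimension at most 1). Let c* ∈ H and let y₁, …, y_t ∈ I(c*) = {x : c* x = true}. Then there is a permutation π of {1,…,t} such that y_{π(1)} ⪯_H y_{π(2)} ⪯_H … ⪯_H y_{π(t)}; in particular any two of the points y₁,…,y_t are comparable under ⪯_H. -/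
/-!
Two points `a, b` of `I(c*)` that are incomparable under `⪯_H` would be shattered by `H`:
`c*` realises `{a, b}`, the constant-false concept realises `∅`, and the two concepts
witnessing `a ⋠ b` and `b ⋠ a` realise `{a}` and `{b}`. Hence `⪯_H` is a total preorder
on `I(c*)`, and sorting the points by it gives the permutation.
-/

theorem Fin.exists_perm_rel_of_le {n : ℕ} (r : Fin n → Fin n → Prop)
    (total : ∀ i j, r i j ∨ r j i) (trans : ∀ {i j k}, r i j → r j k → r i k) :
    ∃ π : Equiv.Perm (Fin n), ∀ i j, i ≤ j → r (π i) (π j) := by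
  classical
  have : Std.Total r := ⟨total⟩
  have : IsTrans (Fin n) r := ⟨fun _ _ _ => trans⟩
  have : Std.Refl r := ⟨fun i => (total i i).elim id id⟩
  set l := (List.finRange n).insertionSort r
  have hperm : l.Perm (List.finRange n) := List.perm_insertionSort r _
  have hlen : l.length = n := by simpa using hperm.length_eq
  let e := (hperm.nodup_iff.mpr (List.nodup_finRange n)).getEquivOfForallMemList l
    fun i => hperm.mem_iff.mpr (List.mem_finRange i)
  exact ⟨(finCongr hlen.symm).trans e, fun i j hij =>
    (List.pairwise_insertionSort r _).rel_get_of_le (a := Fin.cast hlen.symm i) hij⟩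

namespace Prec

variable {X : Type*} {H : Set (X → Bool)}

theorem refl (x : X) : Prec H x x := fun _ _ => id

theorem trans {x y z : X} (hxy : Prec H x y) (hyz : Prec H y z) : Prec H x z :=
  fun c hc hx => hyz c hc (hxy c hc hx)

end Prec

theorem shatters_pair {X : Type*} [DecidableEq X] {H : Set (X → Bool)} {a b : X}
    (h : ∀ p q : Bool, ∃ c ∈ H, c a = p ∧ c b = q) : Shatters H {a, b} := by
  intro B hB
  obtain ⟨c, hc, hca, hcb⟩ := h (decide (a ∈ B)) (decide (b ∈ B))
  refine ⟨c, hc, fun x hx => ?_, fun x hx hxB => ?_⟩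
  · rcases (by simpa using hB hx : x = a ∨ x = b) with rfl | rfl <;> simp [*]
  · rcases (by simpa using hx : x = a ∨ x = b) with rfl | rfl <;> simp [*]

theorem prec_or_prec_of_forall_not_shatters {X : Type*} {H : Set (X → Bool)}
    (hfalse : (fun _ => false) ∈ H) (hVC : ∀ A : Finset X, A.card = 2 → ¬ Shatters H A)
    {c : X → Bool} (hc : c ∈ H) {a b : X} (ha : c a = true) (hb : c b = true) :
    Prec H a b ∨ Prec H b a := by
  classical
  by_contra! ⟨hab, hba⟩
  have hne : a ≠ b := by
    rintro rfl
    exact hab (Prec.refl a)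
  simp only [Prec, not_forall, Bool.not_eq_true] at hab hba
  obtain ⟨c₁, hc₁, hc₁a, hc₁b⟩ := hab
  obtain ⟨c₂, hc₂, hc₂b, hc₂a⟩ := hba
  refine hVC {a, b} (Finset.card_pair hne) (shatters_pair fun p q => ?_)
  cases p <;> cases q
  exacts [⟨_, hfalse, rfl, rfl⟩, ⟨c₂, hc₂, hc₂a, hc₂b⟩, ⟨c₁, hc₁, hc₁a, hc₁b⟩, ⟨c, hc, ha, hb⟩]

/-- For a VC-dimension-1 class containing the constant-false function, finitely
many points of `I(c*)` can be sorted into a `⪯_H`-ascending order. -/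
theorem exists_sorting_perm {X : Type*} (H : Set (X → Bool))
    (hfalse : (fun _ => false) ∈ H)
    (hVC : ∀ A : Finset X, A.card = 2 → ¬ Shatters H A)
    (cstar : X → Bool) (hcstar : cstar ∈ H)
    (t : ℕ) (y : Fin t → X) (hy : ∀ i, cstar (y i) = true) :
    ∃ π : Equiv.Perm (Fin t),
      ∀ i j : Fin t, i ≤ j → Prec H (y (π i)) (y (π j)) :=
  Fin.exists_perm_rel_of_le (fun i j => Prec H (y i) (y j))
    (fun i j => prec_or_prec_of_forall_not_shatters hfalse hVC hcstar (hy i) (hy j))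
    Prec.trans
end

section
/- Let H be a set of functions X → Bool such that the constant-false function belongs to H, no 2-element subset of X is shattered by H (VC dimension at most 1), and H separates points. Suppose x, x' ∈ X are distinct points whose distances in the tree structure are finite and equal, i.e., d(x) = d(x') < ∞. Then there is no c ∈ H with c x = true and c x' = true. (Hence the quality function used in the choosing-mechanism step of the learner is 1-bounded: any single labeled example can increase the score of at most one candidate point on a fixed layer.) -/
/-- The distance of a point `x`: the supremum of `k` over chains
`x = z₀ ⪯_H z₁ ⪯_H ⋯ ⪯_H z_k` of pairwise distinct points. -/
noncomputable def treeDist {X : Type*} (H : Set (X → Bool)) (x : X) : ℕ∞ :=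
  sSup ((fun k : ℕ => (k : ℕ∞)) '' {k | ∃ z : Fin (k + 1) → X,
    Function.Injective z ∧ z 0 = x ∧
      ∀ i : Fin k, Prec H (z i.castSucc) (z i.succ)})

lemma prec_antisymm {X : Type*} {H : Set (X → Bool)} (hsep : SeparatesPts H)
    {a b : X} (hab : Prec H a b) (hba : Prec H b a) : a = b := by
  by_contra hne
  obtain ⟨c, hc, hcne⟩ := hsep a b hne
  cases hca : c a with
  | true => exact hcne (by rw [hca, hab c hc hca])
  | false =>
    have hcb : c b = true := by
      cases hcb : c b with
      | true => rfl
      | false => exact absurd (hca.trans hcb.symm) hcne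
    exact absurd (hba c hc hcb) (by simp [hca])

lemma prec_trans {X : Type*} {H : Set (X → Bool)} {a b c : X}
    (h1 : Prec H a b) (h2 : Prec H b c) : Prec H a c :=
  fun f hf ha => h2 f hf (h1 f hf ha)

lemma prec_chain {X : Type*} {H : Set (X → Bool)} {k : ℕ} {z : Fin (k + 1) → X}
    (hz : ∀ i : Fin k, Prec H (z i.castSucc) (z i.succ)) (i : Fin (k + 1)) :
    Prec H (z 0) (z i) := by
  obtain ⟨n, hn⟩ := i
  induction n with
  | zero => exact fun c _ h => h
  | succ m ih =>
    have hm : m < k := Nat.lt_of_succ_lt_succ hn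
    exact prec_trans (ih (Nat.lt_of_succ_lt hn)) (hz ⟨m, hm⟩)

lemma treeDist_lt {X : Type*} {H : Set (X → Bool)} (hsep : SeparatesPts H)
    {x x' : X} (hne : x ≠ x') (hprec : Prec H x x')
    (hfin : treeDist H x' < ⊤) : treeDist H x' < treeDist H x := by
  set S' : Set ℕ := {k | ∃ z : Fin (k + 1) → X,
    Function.Injective z ∧ z 0 = x' ∧
      ∀ i : Fin k, Prec H (z i.castSucc) (z i.succ)} with hS'
  have h0 : 0 ∈ S' := by
    refine ⟨fun _ => x', ?_, rfl, fun i => i.elim0⟩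
    intro a b _; exact Fin.ext (by omega)
  have hd : treeDist H x' = sSup ((fun k : ℕ => (k : ℕ∞)) '' S') := rfl
  lift treeDist H x' to ℕ using hfin.ne with n hn
  have hsub : S' ⊆ Set.Iic n := by
    intro k hk
    have : (k : ℕ∞) ≤ (n : ℕ∞) := by
      rw [hd]; exact le_sSup ⟨k, hk, rfl⟩
    exact_mod_cast this
  have hfinS : ((fun k : ℕ => (k : ℕ∞)) '' S').Finite :=
    ((Set.finite_Iic n).subset hsub).image _
  have hmem : sSup ((fun k : ℕ => (k : ℕ∞)) '' S') ∈ (fun k : ℕ => (k : ℕ∞)) '' S' :=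
    Set.Nonempty.csSup_mem ⟨0, 0, h0, rfl⟩ hfinS
  rw [← hd] at hmem
  obtain ⟨k, hk, hkn⟩ := hmem
  obtain ⟨z, hzinj, hz0, hzstep⟩ := hk
  -- build a chain of length k+1 from x
  have hxnotin : x ∉ Set.range z := by
    rintro ⟨i, hi⟩
    have h2 : Prec H x' x := by
      have := prec_chain hzstep i
      rw [hz0, hi] at this
      exact this
    exact hne (prec_antisymm hsep hprec h2)
  set w : Fin (k + 1 + 1) → X := Fin.cons x z with hw
  have hwinj : Function.Injective w := Fin.cons_injective_of_injective hxnotin hzinj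
  have hwstep : ∀ i : Fin (k + 1), Prec H (w i.castSucc) (w i.succ) := by
    intro i
    induction i using Fin.cases with
    | zero =>
      have e1 : w (Fin.castSucc 0) = x := rfl
      have e2 : w (Fin.succ 0) = x' := by
        rw [hw, show (Fin.succ 0 : Fin (k + 1 + 1)) = Fin.succ 0 from rfl, Fin.cons_succ, hz0]
      rw [e1, e2]; exact hprec
    | succ j =>
      have e1 : w (Fin.castSucc (Fin.succ j)) = z (Fin.castSucc j) := by
        rw [hw, ← Fin.succ_castSucc, Fin.cons_succ]
      have e2 : w (Fin.succ (Fin.succ j)) = z (Fin.succ j) := by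
        rw [hw, Fin.cons_succ]
      rw [e1, e2]; exact hzstep j
  have hmem' : ((k + 1 : ℕ) : ℕ∞) ≤ treeDist H x :=
    le_sSup ⟨k + 1, ⟨w, hwinj, rfl, hwstep⟩, rfl⟩
  calc (n : ℕ∞) = (k : ℕ∞) := hkn.symm
    _ < ((k + 1 : ℕ) : ℕ∞) := by exact_mod_cast Nat.lt_succ_self k
    _ ≤ treeDist H x := hmem'

/-- For a point-separating VC-dimension-1 class containing the constant-false
function, two distinct points with equal finite distance cannot both be labeled
`true` by a single concept of `H`. -/
theorem no_common_one_of_eq_dist {X : Type*} (H : Set (X → Bool))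
    (hfalse : (fun _ => false) ∈ H)
    (hVC : ∀ A : Finset X, A.card = 2 → ¬ Shatters H A)
    (hsep : SeparatesPts H)
    (x x' : X) (hne : x ≠ x')
    (hdist : treeDist H x = treeDist H x') (hfin : treeDist H x < ⊤) :
    ¬ ∃ c ∈ H, c x = true ∧ c x' = true := by
  classical
  rintro ⟨c, hc, hcx, hcx'⟩
  have hcomp : Prec H x x' ∨ Prec H x' x := by
    by_contra h
    push_neg at h
    obtain ⟨h1, h2⟩ := h
    unfold Prec at h1 h2
    push_neg at h1 h2
    obtain ⟨c1, hc1, hc1x, hc1x'⟩ := h1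
    obtain ⟨c2, hc2, hc2x', hc2x⟩ := h2
    simp only [ne_eq, Bool.not_eq_true] at hc1x'
    simp only [ne_eq, Bool.not_eq_true] at hc2x
    refine hVC {x, x'} (by rw [Finset.card_insert_of_notMem (by simp [hne]),
      Finset.card_singleton]) ?_
    intro B hB
    have hmem : ∀ y ∈ B, y = x ∨ y = x' := by
      intro y hy
      have := hB hy
      simpa using this
    by_cases hx : x ∈ B <;> by_cases hx' : x' ∈ B
    · refine ⟨c, hc, fun y hy => ?_, fun y hyA hyB => ?_⟩
      · rcases hmem y hy with rfl | rfl <;> assumption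
      · rcases (by simpa using hyA : y = x ∨ y = x') with rfl | rfl <;> tauto
    · refine ⟨c1, hc1, fun y hy => ?_, fun y hyA hyB => ?_⟩
      · rcases hmem y hy with rfl | rfl
        · exact hc1x
        · exact absurd hy hx'
      · rcases (by simpa using hyA : y = x ∨ y = x') with rfl | rfl
        · exact absurd hx hyB
        · exact hc1x'
    · refine ⟨c2, hc2, fun y hy => ?_, fun y hyA hyB => ?_⟩
      · rcases hmem y hy with rfl | rfl
        · exact absurd hy hx
        · exact hc2x'
      · rcases (by simpa using hyA : y = x ∨ y = x') with rfl | rfl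
        · exact hc2x
        · exact absurd hx' hyB
    · exact ⟨fun _ => false, hfalse, fun y hy => absurd (hmem y hy) (by rintro (rfl | rfl) <;> tauto),
        fun y _ _ => rfl⟩
  rcases hcomp with hp | hp
  · have := treeDist_lt hsep hne hp (hdist ▸ hfin)
    rw [← hdist] at this
    exact absurd this (lt_irrefl _)
  · have := treeDist_lt hsep hne.symm hp hfin
    rw [hdist] at this
    exact absurd this (lt_irrefl _)
end
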